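/- Let U' = {(z₁, z₂) ∈ ℂ² : v − 2z₂z̄₂ > 0, v = z₁ + z̄₁}, let g = (v − 2z₂z̄₂)^{−1/2}(dz₁ − 2z̄₂dz₂)(dz̄₁ − 2z₂dz̄₂) + 4(v − 2z₂z̄₂)^{1/2} dz₂ dz̄₂, and define J = i[(dz₁ − 2z̄₂dz₂)⊗∂_{z₁} − (dz̄₁ − 2z₂dz̄₂)⊗∂_{z̄₁} + dz̄₂⊗(∂_{z̄₂} + 2z₂∂_{z̄₁}) − dz₂⊗(∂_{z₂} + 2z̄₂∂_{z₁})]. Then at every point of U', J is a real endomorphism of the tangent space satisfying J² = −id and g(JX, JY) = g(X,Y), and J is integrable: its Nijenhuis tensor N_J(X,Y) = [JX, JY] − [X,Y] − J[JX, Y] − J[X, JY] vanishes identically on U'. -/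

import Mathlib

noncomputable section

/-- `w(z₁,z₂) = v − 2z₂z̄₂` where `v = z₁ + z̄₁ = 2 Re z₁`. -/
def wDef (p : ℂ × ℂ) : ℝ := 2 * p.1.re - 2 * Complex.normSq p.2

/-- The region `U' = {(z₁,z₂) ∈ ℂ² : v − 2z₂z̄₂ > 0}`. -/
def Uprime : Set (ℂ × ℂ) := {p | 0 < wDef p}

/-- `K = log(v − 2z₂z̄₂)`. -/
def KDef (p : ℂ × ℂ) : ℝ := Real.log (wDef p)

/-- `K` as a function of `v` at fixed `z₂`. -/
def KofV (z₂ : ℂ) (v : ℝ) : ℝ := Real.log (v - 2 * Complex.normSq z₂)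

/-- `K_v = ∂K/∂v`. -/
def Kv (p : ℂ × ℂ) : ℝ := deriv (KofV p.2) (2 * p.1.re)

/-- `K_vv = ∂²K/∂v²`. -/
def Kvv (p : ℂ × ℂ) : ℝ := deriv (deriv (KofV p.2)) (2 * p.1.re)

/-- The Wirtinger derivative `∂G/∂z = ½(∂_x G − i ∂_y G)` of `G : ℂ → ℂ` at `c`. -/
def wirtD (G : ℂ → ℂ) (c : ℂ) : ℂ :=
  (deriv (fun x : ℝ => G ((x : ℂ) + (c.im : ℂ) * Complex.I)) c.re -
    Complex.I * deriv (fun y : ℝ => G ((c.re : ℂ) + (y : ℂ) * Complex.I)) c.im) / 2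

/-- The Wirtinger derivative `∂G/∂z̄ = ½(∂_x G + i ∂_y G)` of `G : ℂ → ℂ` at `c`. -/
def wirtDbar (G : ℂ → ℂ) (c : ℂ) : ℂ :=
  (deriv (fun x : ℝ => G ((x : ℂ) + (c.im : ℂ) * Complex.I)) c.re +
    Complex.I * deriv (fun y : ℝ => G ((c.re : ℂ) + (y : ℂ) * Complex.I)) c.im) / 2

/-- `K_{v2} = ∂²K/∂v∂z₂` (Wirtinger derivative in `z₂` of `K_v`). -/
def Kv2 (p : ℂ × ℂ) : ℂ :=
  wirtD (fun z₂ => ((deriv (KofV z₂) (2 * p.1.re) : ℝ) : ℂ)) p.2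

/-- `K_{v2̄} = ∂²K/∂v∂z̄₂`. -/
def Kv2bar (p : ℂ × ℂ) : ℂ :=
  wirtDbar (fun z₂ => ((deriv (KofV z₂) (2 * p.1.re) : ℝ) : ℂ)) p.2

/-- `K_{22̄} = ∂²K/∂z₂∂z̄₂` (at fixed `v`). -/
def K22bar (p : ℂ × ℂ) : ℂ :=
  wirtDbar (fun z₂ =>
    wirtD (fun u => ((Real.log (2 * p.1.re - 2 * Complex.normSq u) : ℝ) : ℂ)) z₂) p.2

/-- The 1-form `dz₁ − 2z̄₂dz₂` evaluated on a real tangent vector `X ∈ ℂ² ≅ ℝ⁴`. -/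
def AForm (p : ℂ × ℂ) (X : ℂ × ℂ) : ℂ := X.1 - 2 * starRingEnd ℂ p.2 * X.2

/-- The explicit Ricci-flat metric
`g = (v − 2z₂z̄₂)^{−1/2}(dz₁ − 2z̄₂dz₂)(dz̄₁ − 2z₂dz̄₂) + 4(v − 2z₂z̄₂)^{1/2} dz₂ dz̄₂`
(with `2αβ = α⊗β + β⊗α`) on real tangent vectors. -/
def gExpl (p : ℂ × ℂ) (X Y : ℂ × ℂ) : ℝ :=
  1 / Real.sqrt (wDef p) * (AForm p X * starRingEnd ℂ (AForm p Y)).re +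
    4 * Real.sqrt (wDef p) * (X.2 * starRingEnd ℂ Y.2).re

/-- The almost complex structure
`J⁺_{e^{iφ}} = 2Re{ i e^{iφ} [ (2(v − 2z₂z̄₂)^{1/2})^{−1}(dz₁ − 2z̄₂dz₂) ⊗ (∂_{z̄₂} + 2z₂∂_{z̄₁}) − 2(v − 2z₂z̄₂)^{1/2} dz₂ ⊗ ∂_{z̄₁} ] }`
as a real endomorphism of the tangent space `ℂ² ≅ ℝ⁴`: a real tangent vector `X`
corresponds to `X.1 ∂_{z₁} + conj X.1 ∂_{z̄₁} + X.2 ∂_{z₂} + conj X.2 ∂_{z̄₂}` in the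
complexified tangent space; the components below are the `∂_{z₁}`- and
`∂_{z₂}`-coefficients of `(T + T̄)(X)`. -/
def JExpl (φ : ℝ) (p : ℂ × ℂ) (X : ℂ × ℂ) : ℂ × ℂ :=
  (starRingEnd ℂ (Complex.I * Complex.exp ((φ : ℂ) * Complex.I) *
      (AForm p X / (2 * (Real.sqrt (wDef p) : ℂ)) * (2 * p.2) -
        2 * (Real.sqrt (wDef p) : ℂ) * X.2)),
   starRingEnd ℂ (Complex.I * Complex.exp ((φ : ℂ) * Complex.I) *
      (AForm p X / (2 * (Real.sqrt (wDef p) : ℂ)))))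

/-- The hermitian structure (of the opposite orientation)
`J = i[(dz₁ − 2z̄₂dz₂)⊗∂_{z₁} − (dz̄₁ − 2z₂dz̄₂)⊗∂_{z̄₁} + dz̄₂⊗(∂_{z̄₂} + 2z₂∂_{z̄₁}) − dz₂⊗(∂_{z₂} + 2z̄₂∂_{z₁})]`
as a real endomorphism of the tangent space `ℂ² ≅ ℝ⁴`: a real tangent vector `X`
corresponds to `X.1 ∂_{z₁} + conj X.1 ∂_{z̄₁} + X.2 ∂_{z₂} + conj X.2 ∂_{z̄₂}`; the
components below are the `∂_{z₁}`- and `∂_{z₂}`-coefficients of `J X` (the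
`∂_{z̄}`-coefficients are their conjugates). -/
def JKah (p : ℂ × ℂ) (X : ℂ × ℂ) : ℂ × ℂ :=
  (Complex.I * AForm p X + (-Complex.I * X.2) * (2 * starRingEnd ℂ p.2),
   -Complex.I * X.2)

/-- The Lie bracket `[X,Y]` of two vector fields on (an open subset of) `ℂ² ≅ ℝ⁴`. -/
def lieBr (X Y : ℂ × ℂ → ℂ × ℂ) (p : ℂ × ℂ) : ℂ × ℂ :=
  fderiv ℝ Y p (X p) - fderiv ℝ X p (Y p)

/-- The vector field `J X`. -/
def JKahField (X : ℂ × ℂ → ℂ × ℂ) : ℂ × ℂ → ℂ × ℂ := fun p => JKah p (X p)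

/-- The Nijenhuis tensor `N_J(X,Y) = [JX, JY] − [X,Y] − J[JX, Y] − J[X, JY]` of `J`. -/
def nijKah (X Y : ℂ × ℂ → ℂ × ℂ) (p : ℂ × ℂ) : ℂ × ℂ :=
  lieBr (JKahField X) (JKahField Y) p - lieBr X Y p -
    JKah p (lieBr (JKahField X) Y p) - JKah p (lieBr X (JKahField Y) p)

/-!
`J` multiplies the forms `dz₁ − 2z̄₂dz₂` and `dz₂` by `i` and `−i`, so it squares to `−1` and
preserves `g`. The Nijenhuis tensor of an endomorphism field `J` with `J² = -1` is tensorial: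
`N_J(X,Y) = (D_{JX}J)Y - (D_{JY}J)X + J (D_Y J)X - J (D_X J)Y`.
Here `J` is affine in the point, and `(D_V J)X = -4i V̄₂ X₂ ∂_{z₁}` (plus its conjugate) depends
only on the `z₂`-components and lies in the `∂_{z₁}`-line, on which `J` acts as `i`; the
four terms then cancel pairwise.
-/

open Complex ComplexConjugate VectorField

section Nijenhuis

variable {𝕜 E : Type*} [NontriviallyNormedField 𝕜] [NormedAddCommGroup E] [NormedSpace 𝕜 E]

def nijenhuis (J : E → E →L[𝕜] E) (X Y : E → E) (p : E) : E :=
  lieBracket 𝕜 (fun q => J q (X q)) (fun q => J q (Y q)) p - lieBracket 𝕜 X Y p -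
    J p (lieBracket 𝕜 (fun q => J q (X q)) Y p) - J p (lieBracket 𝕜 X (fun q => J q (Y q)) p)

lemma fderiv_clm_apply_apply {J : E → E →L[𝕜] E} {X : E → E} {p : E}
    (hJ : DifferentiableAt 𝕜 J p) (hX : DifferentiableAt 𝕜 X p) (v : E) :
    fderiv 𝕜 (fun q => J q (X q)) p v = fderiv 𝕜 J p v (X p) + J p (fderiv 𝕜 X p v) := by
  rw [fderiv_clm_apply hJ hX]
  simp [add_comm]

theorem nijenhuis_eq_fderiv {J : E → E →L[𝕜] E} {X Y : E → E} {p : E}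
    (hJ : DifferentiableAt 𝕜 J p) (hX : DifferentiableAt 𝕜 X p) (hY : DifferentiableAt 𝕜 Y p)
    (hJJ : ∀ v, J p (J p v) = -v) :
    nijenhuis J X Y p =
      fderiv 𝕜 J p (J p (X p)) (Y p) - fderiv 𝕜 J p (J p (Y p)) (X p) +
        J p (fderiv 𝕜 J p (Y p) (X p)) - J p (fderiv 𝕜 J p (X p) (Y p)) := by
  simp only [nijenhuis, lieBracket, fderiv_clm_apply_apply hJ hX, fderiv_clm_apply_apply hJ hY,
    map_add, map_sub, hJJ]
  abel

end Nijenhuis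

lemma JKah_eq (p X : ℂ × ℂ) :
    JKah p X = (I * X.1 - 4 * I * (conj p.2 * X.2), -I * X.2) := by
  simp only [JKah, AForm]
  ext <;> ring

lemma JKah_add (p X Y : ℂ × ℂ) : JKah p (X + Y) = JKah p X + JKah p Y := by
  simp only [JKah_eq, Prod.fst_add, Prod.snd_add, Prod.mk_add_mk]
  ext <;> ring

lemma JKah_smul (p : ℂ × ℂ) (c : ℝ) (X : ℂ × ℂ) : JKah p (c • X) = c • JKah p X := by
  simp only [JKah_eq, Prod.smul_fst, Prod.smul_snd, Prod.smul_mk, Complex.real_smul]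
  ext <;> ring

lemma JKah_JKah (p X : ℂ × ℂ) : JKah p (JKah p X) = -X := by
  simp only [JKah_eq]
  ext
  · simp only [Prod.fst_neg]
    linear_combination X.1 * I_sq
  · simp only [Prod.snd_neg]
    linear_combination X.2 * I_sq

lemma AForm_JKah (p X : ℂ × ℂ) : AForm p (JKah p X) = I * AForm p X := by
  simp only [JKah, AForm]
  ring

lemma gExpl_JKah (p X Y : ℂ × ℂ) : gExpl p (JKah p X) (JKah p Y) = gExpl p X Y := by
  have hA : AForm p (JKah p X) * conj (AForm p (JKah p Y)) = AForm p X * conj (AForm p Y) := by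
    rw [AForm_JKah, AForm_JKah, map_mul, conj_I]
    linear_combination (-(AForm p X * conj (AForm p Y))) * I_sq
  have h₂ : (JKah p X).2 * conj (JKah p Y).2 = X.2 * conj Y.2 := by
    simp only [JKah, map_mul, map_neg, conj_I]
    linear_combination (-(X.2 * conj Y.2)) * I_sq
  simp only [gExpl, hA, h₂]

def JKahCLM (p : ℂ × ℂ) : (ℂ × ℂ) →L[ℝ] ℂ × ℂ :=
  LinearMap.toContinuousLinearMap ⟨⟨JKah p, JKah_add p⟩, JKah_smul p⟩

@[simp] lemma JKahCLM_apply (p X : ℂ × ℂ) : JKahCLM p X = JKah p X := rfl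

lemma contDiff_JKahCLM : ContDiff ℝ 1 JKahCLM := by
  refine contDiff_clm_apply_iff.2 fun X => ?_
  simp only [JKahCLM_apply, JKah_eq]
  have : ContDiff ℝ 1 fun q : ℂ × ℂ => conj q.2 := conjCLE.contDiff.comp contDiff_snd
  fun_prop

lemma hasFDerivAt_JKah_apply (X p : ℂ × ℂ) :
    HasFDerivAt (fun q => JKah q X)
      (((-4 * I * X.2) • (conjCLE : ℂ →L[ℝ] ℂ).comp (ContinuousLinearMap.snd ℝ ℂ ℂ)).prod 0) p := by
  have hconj := ((conjCLE : ℂ →L[ℝ] ℂ).comp (ContinuousLinearMap.snd ℝ ℂ ℂ)).hasFDerivAt (x := p)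
  refine (((hconj.const_mul (-4 * I * X.2)).const_add (I * X.1)).prodMk
    (hasFDerivAt_const (-I * X.2) p)).congr_of_eventuallyEq (.of_eq ?_)
  funext q
  simp only [JKah_eq, ContinuousLinearMap.comp_apply, ContinuousLinearMap.coe_snd',
    ContinuousLinearEquiv.coe_coe, ContinuousAlgEquiv.coeCLE_apply, conjCAE_apply,
    Prod.mk.injEq, and_true]
  ring

lemma fderiv_JKahCLM_apply (p v X : ℂ × ℂ) :
    fderiv ℝ JKahCLM p v X = (-4 * I * X.2 * conj v.2, 0) := by
  have hJ := (contDiff_JKahCLM.differentiable one_ne_zero p).hasFDerivAt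
  have h := (hJ.clm_apply (hasFDerivAt_const X p)).unique (hasFDerivAt_JKah_apply X p)
  simpa [mul_comm] using DFunLike.congr_fun h v

lemma nijKah_eq_nijenhuis (X Y : ℂ × ℂ → ℂ × ℂ) : nijKah X Y = nijenhuis JKahCLM X Y := rfl

theorem nijKah_eq_zero {X Y : ℂ × ℂ → ℂ × ℂ} {p : ℂ × ℂ}
    (hX : DifferentiableAt ℝ X p) (hY : DifferentiableAt ℝ Y p) : nijKah X Y p = 0 := by
  rw [nijKah_eq_nijenhuis, nijenhuis_eq_fderiv (contDiff_JKahCLM.differentiable one_ne_zero p)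
    hX hY (JKah_JKah p)]
  simp only [fderiv_JKahCLM_apply, JKahCLM_apply, JKah_eq, map_mul, map_neg, conj_I]
  ext
  · simp only [Prod.fst_sub, Prod.fst_add, Prod.fst_zero]
    ring
  · simp

/-- At every point of `U'`, `J` is a real endomorphism of the tangent
space with `J² = −id`, compatible with the explicit metric `g`, and `J` is integrable:
its Nijenhuis tensor vanishes identically on `U'`. -/
theorem JKah_hermitian_integrable :
    (∀ p ∈ Uprime,
      (∀ X Y : ℂ × ℂ, JKah p (X + Y) = JKah p X + JKah p Y) ∧
      (∀ (c : ℝ) (X : ℂ × ℂ), JKah p (c • X) = c • JKah p X) ∧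
      (∀ X : ℂ × ℂ, JKah p (JKah p X) = -X) ∧
      (∀ X Y : ℂ × ℂ, gExpl p (JKah p X) (JKah p Y) = gExpl p X Y)) ∧
    (∀ X Y : ℂ × ℂ → ℂ × ℂ, ContDiff ℝ (⊤ : ℕ∞) X → ContDiff ℝ (⊤ : ℕ∞) Y →
      ∀ p ∈ Uprime, nijKah X Y p = 0) := by
  refine ⟨fun p _ => ⟨JKah_add p, JKah_smul p, JKah_JKah p, gExpl_JKah p⟩, ?_⟩
  intro X Y hX hY p _
  exact nijKah_eq_zero (hX.differentiable (by simp) p) (hY.differentiable (by simp) p)
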